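/- Exact integration on the double grid: let M = 2N−1 (componentwise), let A : Y → ℂ be integrable, and let p, q be trigonometric polynomials of degree N. Then ∫_Y A(x) p(x) q(x) dx = ∑_{k∈Z_M} ( ∫_Y A(x) φ_M^k(x) dx ) · p(x_M^k) · q(x_M^k). -/

import Mathlib

open Finset MeasureTheory

noncomputable section

/-- The index set `Z_N = {k ∈ ℤ^d : |k_α| ≤ (N_α−1)/2 for all α}`. -/
def ZN {d : ℕ} (N : Fin d → ℕ) : Finset (Fin d → ℤ) :=
  Finset.Icc (fun α => -(((N α : ℤ) - 1) / 2)) (fun α => ((N α : ℤ) - 1) / 2)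

/-- `|N|_Π = ∏_α N_α`, as a complex number. -/
def NPi {d : ℕ} (N : Fin d → ℕ) : ℂ := ∏ α, (N α : ℂ)

/-- `ω_N^{mk} = exp(2πi ∑_α m_α k_α / N_α)`. -/
def omegaN {d : ℕ} (N : Fin d → ℕ) (m k : Fin d → ℤ) : ℂ :=
  Complex.exp (2 * (Real.pi : ℂ) * Complex.I * ∑ α, ((m α * k α : ℤ) : ℂ) / (N α : ℂ))

/-- The Fourier basis function `φ^k(x) = exp(2πi k·x)`. -/
def trigPhi {d : ℕ} (k : Fin d → ℤ) (x : Fin d → ℝ) : ℂ :=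
  Complex.exp (2 * (Real.pi : ℂ) * Complex.I * ∑ α, (k α : ℂ) * (x α : ℂ))

/-- The fundamental trigonometric polynomial
`φ_N^k(x) = (1/|N|_Π) ∑_{m∈Z_N} ω_N^{−km} φ^m(x)`. -/
def fundTrig {d : ℕ} (N : Fin d → ℕ) (k : Fin d → ℤ) (x : Fin d → ℝ) : ℂ :=
  (1 / NPi N) * ∑ m ∈ ZN N, omegaN N (-k) m * trigPhi m x

/-- The regular grid point `x_N^k = (k_1/N_1, …, k_d/N_d)`. -/
def gridPt {d : ℕ} (N : Fin d → ℕ) (k : Fin d → ℤ) : Fin d → ℝ :=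
  fun α => (k α : ℝ) / (N α : ℝ)

/-- The periodic cell `Y = (−1/2, 1/2)^d ⊆ ℝ^d`. -/
def cellY (d : ℕ) : Set (Fin d → ℝ) :=
  Set.univ.pi fun _ : Fin d => Set.Ioo (-(1 / 2) : ℝ) (1 / 2)

/-!
Since the frequencies `a + b` of `p q` lie in `Z_M`, the product `p q` is a trigonometric
polynomial of degree `M`. Such polynomials are reproduced by their interpolant
`∑ₖ f(x_M^k) φ_M^k` on the grid, by the discrete orthogonality
`∑_{k ∈ Z_M} ω_M^{kt} = |M|_Π · [M ∣ t]` of the primitive roots `exp (2πi / M_α)`.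
Integrating the interpolant of `p q` against `A` term by term gives the formula.
-/

open Complex
open scoped Real

theorem sum_zpow_Icc_eq_zero {K : Type*} [Field K] {ζ : K} {n : ℕ} (hζn : ζ ^ n = 1)
    (hζ : ζ ≠ 1) {a b : ℤ} (hab : (b + 1 - a).toNat = n) : ∑ j ∈ Icc a b, ζ ^ j = 0 := by
  rcases n.eq_zero_or_pos with rfl | hn
  · rw [Icc_eq_empty_of_lt (by omega), sum_empty]
  have hζ0 : ζ ≠ 0 := by rintro rfl; simp [zero_pow hn.ne'] at hζn
  have hgeom : ∑ i ∈ range n, ζ ^ i = 0 := by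
    have := geom_sum_mul ζ n
    rw [hζn, sub_self, mul_eq_zero] at this
    exact this.resolve_right (sub_ne_zero.mpr hζ)
  rw [Int.Icc_eq_finset_map, hab, sum_map]
  simp only [Function.Embedding.trans_apply, Nat.castEmbedding_apply, addLeftEmbedding_apply,
    zpow_add₀ hζ0, zpow_natCast, ← mul_sum, hgeom, mul_zero]

theorem IsPrimitiveRoot.sum_Icc_zpow_mul {K : Type*} [Field K] {μ : K} {n : ℕ}
    (hμ : IsPrimitiveRoot μ n) {a b : ℤ} (hab : (b + 1 - a).toNat = n) (t : ℤ) :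
    ∑ j ∈ Icc a b, μ ^ (j * t) = if (n : ℤ) ∣ t then (n : K) else 0 := by
  simp_rw [mul_comm _ t, zpow_mul]
  split_ifs with ht
  · simp [(hμ.zpow_eq_one_iff_dvd t).mpr ht, Int.card_Icc, hab]
  · refine sum_zpow_Icc_eq_zero ?_ (mt (hμ.zpow_eq_one_iff_dvd t).mp ht) hab
    rw [← zpow_natCast, ← zpow_mul, mul_comm, zpow_mul, zpow_natCast, hμ.pow_eq_one, one_zpow]

section

variable {d : ℕ}

theorem omegaN_eq_prod (N : Fin d → ℕ) (m k : Fin d → ℤ) :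
    omegaN N m k = ∏ α, exp (2 * π * I / N α) ^ (m α * k α) := by
  rw [omegaN, mul_sum, exp_sum]
  refine prod_congr rfl fun α _ => ?_
  rw [← exp_int_mul]
  ring_nf

theorem mem_ZN {N : Fin d → ℕ} {k : Fin d → ℤ} :
    k ∈ ZN N ↔ ∀ α, -(((N α : ℤ) - 1) / 2) ≤ k α ∧ k α ≤ ((N α : ℤ) - 1) / 2 := by
  simp only [ZN, mem_Icc, Pi.le_def, forall_and]

theorem sum_omegaN_ZN {N : Fin d → ℕ} (hN : ∀ α, Odd (N α)) (t : Fin d → ℤ) :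
    ∑ k ∈ ZN N, omegaN N k t = if ∀ α, (N α : ℤ) ∣ t α then NPi N else 0 := by
  simp_rw [omegaN_eq_prod, ZN, Pi.Icc_eq]
  rw [← prod_univ_sum (f := fun α j => exp (2 * π * I / N α) ^ (j * t α))]
  have hcard : ∀ α, (((N α : ℤ) - 1) / 2 + 1 - -(((N α : ℤ) - 1) / 2)).toNat = N α := fun α => by
    obtain ⟨r, hr⟩ := hN α; omega
  simp_rw [(isPrimitiveRoot_exp _ (hN _).pos.ne').sum_Icc_zpow_mul (hcard _), prod_ite_zero]
  simp [NPi]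

theorem eq_of_mem_ZN_of_dvd_sub {N : Fin d → ℕ} {j m : Fin d → ℤ} (hj : j ∈ ZN N)
    (hm : m ∈ ZN N) (hdvd : ∀ α, (N α : ℤ) ∣ j α - m α) : j = m := by
  funext α
  have hlt : |j α - m α| < N α := by
    have := (mem_ZN.mp hj) α; have := (mem_ZN.mp hm) α
    rw [abs_lt]; omega
  exact sub_eq_zero.mp (Int.eq_zero_of_abs_lt_dvd (hdvd α) hlt)

theorem sum_omegaN_sub {N : Fin d → ℕ} (hN : ∀ α, Odd (N α)) {j m : Fin d → ℤ}
    (hj : j ∈ ZN N) (hm : m ∈ ZN N) :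
    ∑ k ∈ ZN N, omegaN N k (j - m) = if j = m then NPi N else 0 := by
  rw [sum_omegaN_ZN hN]
  refine if_congr ⟨eq_of_mem_ZN_of_dvd_sub hj hm, ?_⟩ rfl rfl
  rintro rfl α
  simp

theorem omegaN_mul_omegaN_neg (N : Fin d → ℕ) (k j m : Fin d → ℤ) :
    omegaN N k j * omegaN N (-k) m = omegaN N k (j - m) := by
  simp only [omegaN, ← exp_add, ← mul_add, ← sum_add_distrib, Pi.neg_apply, Pi.sub_apply]
  congr 2
  exact sum_congr rfl fun α _ => by push_cast; ring

theorem trigPhi_gridPt (N : Fin d → ℕ) (j k : Fin d → ℤ) :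
    trigPhi j (gridPt N k) = omegaN N k j := by
  simp only [trigPhi, omegaN, gridPt]
  congr 2
  exact sum_congr rfl fun α _ => by push_cast; ring

theorem trigPhi_add (a b : Fin d → ℤ) (x : Fin d → ℝ) :
    trigPhi (a + b) x = trigPhi a x * trigPhi b x := by
  simp only [trigPhi, ← exp_add, ← mul_add, ← sum_add_distrib, Pi.add_apply]
  congr 2
  exact sum_congr rfl fun α _ => by push_cast; ring

theorem NPi_ne_zero {N : Fin d → ℕ} (hN : ∀ α, N α ≠ 0) : NPi N ≠ 0 :=
  prod_ne_zero_iff.mpr fun α _ => Nat.cast_ne_zero.mpr (hN α)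

theorem sum_trigPhi_gridPt_mul_fundTrig {N : Fin d → ℕ} (hN : ∀ α, Odd (N α))
    {j : Fin d → ℤ} (hj : j ∈ ZN N) (x : Fin d → ℝ) :
    ∑ k ∈ ZN N, trigPhi j (gridPt N k) * fundTrig N k x = trigPhi j x := by
  calc ∑ k ∈ ZN N, trigPhi j (gridPt N k) * fundTrig N k x
      = 1 / NPi N * ∑ m ∈ ZN N, (∑ k ∈ ZN N, omegaN N k (j - m)) * trigPhi m x := by
        simp only [trigPhi_gridPt, fundTrig, mul_sum, sum_mul]
        rw [sum_comm]
        refine sum_congr rfl fun m _ => sum_congr rfl fun k _ => ?_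
        rw [← omegaN_mul_omegaN_neg]
        ring
    _ = 1 / NPi N * ∑ m ∈ ZN N, (if j = m then NPi N else 0) * trigPhi m x := by
        congr 1
        exact sum_congr rfl fun m hm => by rw [sum_omegaN_sub hN hj hm]
    _ = trigPhi j x := by
        simp only [ite_mul, zero_mul, sum_ite_eq, if_pos hj]
        field_simp [NPi_ne_zero fun α => (hN α).pos.ne']

theorem eq_sum_gridPt_mul_fundTrig {N : Fin d → ℕ} (hN : ∀ α, Odd (N α)) {ι : Type*}
    {s : Finset ι} {c : ι → ℂ} {e : ι → Fin d → ℤ} (he : ∀ i ∈ s, e i ∈ ZN N)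
    {f : (Fin d → ℝ) → ℂ} (hf : ∀ x, f x = ∑ i ∈ s, c i * trigPhi (e i) x) (x : Fin d → ℝ) :
    f x = ∑ k ∈ ZN N, f (gridPt N k) * fundTrig N k x := by
  simp only [hf, sum_mul, mul_assoc]
  rw [sum_comm]
  exact sum_congr rfl fun i hi => by
    rw [← mul_sum, sum_trigPhi_gridPt_mul_fundTrig hN (he i hi)]

theorem add_mem_ZN_of_eq_two_mul_sub_one {N M : Fin d → ℕ}
    (hM : ∀ α, M α = 2 * N α - 1) {a b : Fin d → ℤ} (ha : a ∈ ZN N) (hb : b ∈ ZN N) :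
    a + b ∈ ZN M := by
  refine mem_ZN.mpr fun α => ?_
  have := (mem_ZN.mp ha) α; have := (mem_ZN.mp hb) α; have := hM α
  simp only [Pi.add_apply]
  omega

theorem sum_mul_sum_trigPhi (s t : Finset (Fin d → ℤ)) (c c' : (Fin d → ℤ) → ℂ)
    (x : Fin d → ℝ) :
    (∑ a ∈ s, c a * trigPhi a x) * (∑ b ∈ t, c' b * trigPhi b x) =
      ∑ ab ∈ s ×ˢ t, c ab.1 * c' ab.2 * trigPhi (ab.1 + ab.2) x := by
  rw [sum_mul_sum, ← sum_product']
  exact sum_congr rfl fun ab _ => by rw [trigPhi_add]; ring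

theorem continuous_fundTrig (N : Fin d → ℕ) (k : Fin d → ℤ) :
    Continuous (fundTrig N k) := by
  unfold fundTrig trigPhi
  fun_prop

theorem integrableOn_cellY_mul_continuous {A g : (Fin d → ℝ) → ℂ}
    (hA : IntegrableOn A (cellY d)) (hg : Continuous g) :
    IntegrableOn (fun x => A x * g x) (cellY d) :=
  hA.mul_continuousOn_of_subset hg.continuousOn
    (MeasurableSet.univ_pi fun _ => measurableSet_Ioo)
    (isCompact_univ_pi fun _ => isCompact_Icc)
    (Set.pi_mono fun _ _ => Set.Ioo_subset_Icc_self)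

end

theorem exact_integration_double_grid_general
    (d : ℕ) (N : Fin d → ℕ)
    (hodd : ∀ α, Odd (N α))
    (M : Fin d → ℕ) (hM : ∀ α, M α = 2 * N α - 1)
    (A : (Fin d → ℝ) → ℂ) (hA : IntegrableOn A (cellY d))
    (phat qhat : (Fin d → ℤ) → ℂ) (p q : (Fin d → ℝ) → ℂ)
    (hp : ∀ x, p x = ∑ k ∈ ZN N, phat k * trigPhi k x)
    (hq : ∀ x, q x = ∑ k ∈ ZN N, qhat k * trigPhi k x) :
    ∫ x in cellY d, A x * p x * q x =
      ∑ k ∈ ZN M, (∫ x in cellY d, A x * fundTrig M k x) *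
        (p (gridPt M k) * q (gridPt M k)) := by
  have hModd : ∀ α, Odd (M α) := fun α => by
    obtain ⟨r, hr⟩ := hodd α
    exact ⟨2 * r, by rw [hM α, hr]; omega⟩
  have hpq : ∀ x, p x * q x =
      ∑ ab ∈ ZN N ×ˢ ZN N, phat ab.1 * qhat ab.2 * trigPhi (ab.1 + ab.2) x :=
    fun x => by rw [hp, hq, sum_mul_sum_trigPhi]
  have hinterp := eq_sum_gridPt_mul_fundTrig hModd
    (fun ab hab => add_mem_ZN_of_eq_two_mul_sub_one hM (mem_product.mp hab).1
      (mem_product.mp hab).2) hpq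
  calc ∫ x in cellY d, A x * p x * q x
      = ∫ x in cellY d, ∑ k ∈ ZN M, A x * fundTrig M k x * (p (gridPt M k) * q (gridPt M k)) := by
        refine integral_congr_ae (ae_of_all _ fun x => ?_)
        simp only [mul_assoc, hinterp x, mul_sum]
        exact sum_congr rfl fun k _ => by ring
    _ = ∑ k ∈ ZN M, ∫ x in cellY d, A x * fundTrig M k x * (p (gridPt M k) * q (gridPt M k)) :=
        integral_finsetSum _ fun k _ =>
          (integrableOn_cellY_mul_continuous hA (continuous_fundTrig M k)).mul_const _
    _ = _ := sum_congr rfl fun k _ => integral_mul_const _ _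

/-- exact integration on the double grid `M = 2N−1`: for integrable
`A : Y → ℂ` and trigonometric polynomials `p, q` of degree `N`,
`∫_Y A p q dx = ∑_{k∈Z_M} (∫_Y A φ_M^k dx) · p(x_M^k) · q(x_M^k)`. -/
theorem exact_integration_double_grid
    (d : ℕ) (hd : 0 < d) (N : Fin d → ℕ)
    (hodd : ∀ α, Odd (N α)) (hpos : ∀ α, 0 < N α)
    (M : Fin d → ℕ) (hM : ∀ α, M α = 2 * N α - 1)
    (A : (Fin d → ℝ) → ℂ) (hA : IntegrableOn A (cellY d))
    (phat qhat : (Fin d → ℤ) → ℂ) (p q : (Fin d → ℝ) → ℂ)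
    (hp : ∀ x, p x = ∑ k ∈ ZN N, phat k * trigPhi k x)
    (hq : ∀ x, q x = ∑ k ∈ ZN N, qhat k * trigPhi k x) :
    ∫ x in cellY d, A x * p x * q x =
      ∑ k ∈ ZN M, (∫ x in cellY d, A x * fundTrig M k x) *
        (p (gridPt M k) * q (gridPt M k)) :=
  exact_integration_double_grid_general d N hodd M hM A hA phat qhat p q hp hq
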